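/- Refinement preserves implementations: let C' = (A', G') and C = (A, G) be contracts such that C' refines C. If a system Σ in driving variable form is an implementation of C', then Σ is also an implementation of C. -/

import Mathlib

/-- A linear system in driving variable form `ẋ = A x + G d`, `w = C x`, `0 = H x`. -/
structure DVSystem (X W D Y : Type)
    [AddCommGroup X] [Module ℝ X] [AddCommGroup W] [Module ℝ W]
    [AddCommGroup D] [Module ℝ D] [AddCommGroup Y] [Module ℝ Y] where
  A : X →ₗ[ℝ] X
  G : D →ₗ[ℝ] X
  C : X →ₗ[ℝ] W
  H : X →ₗ[ℝ] Y

namespace DVSystem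

section basic

variable {X W D Y : Type}
  [AddCommGroup X] [Module ℝ X] [AddCommGroup W] [Module ℝ W]
  [AddCommGroup D] [Module ℝ D] [AddCommGroup Y] [Module ℝ Y]

/-- A subspace `U` is consistent-admissible if `A U ⊆ U + im G` and `U ⊆ ker H`. -/
def Admissible (P : DVSystem X W D Y) (U : Submodule ℝ X) : Prop :=
  U.map P.A ≤ U ⊔ LinearMap.range P.G ∧ U ≤ LinearMap.ker P.H

/-- The consistent subspace `V*`: the largest consistent-admissible subspace. -/
def V (P : DVSystem X W D Y) : Submodule ℝ X :=
  sSup {U | P.Admissible U}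

end basic

section sim

variable {W : Type} [AddCommGroup W] [Module ℝ W]
variable {X₁ D₁ Y₁ : Type} [AddCommGroup X₁] [Module ℝ X₁]
  [AddCommGroup D₁] [Module ℝ D₁] [AddCommGroup Y₁] [Module ℝ Y₁]
variable {X₂ D₂ Y₂ : Type} [AddCommGroup X₂] [Module ℝ X₂]
  [AddCommGroup D₂] [Module ℝ D₂] [AddCommGroup Y₂] [Module ℝ Y₂]

/-- Items (i)-(ii) of the (algebraic) definition of a simulation relation. -/
def SimConds (P₁ : DVSystem X₁ W D₁ Y₁) (P₂ : DVSystem X₂ W D₂ Y₂)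
    (S : Submodule ℝ (X₁ × X₂)) : Prop :=
  ∀ x₁ x₂, (x₁, x₂) ∈ S →
    (∀ d₁ : D₁, P₁.A x₁ + P₁.G d₁ ∈ P₁.V →
      ∃ d₂ : D₂, P₂.A x₂ + P₂.G d₂ ∈ P₂.V ∧
        (P₁.A x₁ + P₁.G d₁, P₂.A x₂ + P₂.G d₂) ∈ S) ∧
    P₁.C x₁ = P₂.C x₂

/-- `S` is a simulation relation of `P₁` by `P₂`. -/
def IsSimRel (P₁ : DVSystem X₁ W D₁ Y₁) (P₂ : DVSystem X₂ W D₂ Y₂)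
    (S : Submodule ℝ (X₁ × X₂)) : Prop :=
  S.map (LinearMap.fst ℝ X₁ X₂) ≤ P₁.V ∧ S.map (LinearMap.snd ℝ X₁ X₂) ≤ P₂.V ∧
    SimConds P₁ P₂ S

/-- `S` is a full simulation relation of `P₁` by `P₂`: in addition `π₁(S) = V₁*`. -/
def IsFullSimRel (P₁ : DVSystem X₁ W D₁ Y₁) (P₂ : DVSystem X₂ W D₂ Y₂)
    (S : Submodule ℝ (X₁ × X₂)) : Prop :=
  IsSimRel P₁ P₂ S ∧ S.map (LinearMap.fst ℝ X₁ X₂) = P₁.V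

/-- `P₁ ≼ P₂`: `P₁` is simulated by `P₂`. -/
def Simulates (P₁ : DVSystem X₁ W D₁ Y₁) (P₂ : DVSystem X₂ W D₂ Y₂) : Prop :=
  ∃ S : Submodule ℝ (X₁ × X₂), IsFullSimRel P₁ P₂ S

/-- The composition `P₁ ∘ P₂` obtained by sharing the external variable `w₁ = w₂`. -/
noncomputable def comp (P₁ : DVSystem X₁ W D₁ Y₁) (P₂ : DVSystem X₂ W D₂ Y₂) :
    DVSystem (X₁ × X₂) W (D₁ × D₂) (Y₁ × Y₂ × W) where
  A := P₁.A.prodMap P₂.A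
  G := P₁.G.prodMap P₂.G
  C := (1/2 : ℝ) • (P₁.C ∘ₗ LinearMap.fst ℝ X₁ X₂ + P₂.C ∘ₗ LinearMap.snd ℝ X₁ X₂)
  H := (P₁.H ∘ₗ LinearMap.fst ℝ X₁ X₂).prod
    ((P₂.H ∘ₗ LinearMap.snd ℝ X₁ X₂).prod
      (P₁.C ∘ₗ LinearMap.fst ℝ X₁ X₂ - P₂.C ∘ₗ LinearMap.snd ℝ X₁ X₂))

end sim

section relcomp

variable {X₁ X₂ X₃ : Type} [AddCommGroup X₁] [Module ℝ X₁]
  [AddCommGroup X₂] [Module ℝ X₂] [AddCommGroup X₃] [Module ℝ X₃]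

/-- Composition of linear relations:
`{(x₁, x₃) | ∃ x₂, (x₁, x₂) ∈ S₁₂ ∧ (x₂, x₃) ∈ S₂₃}`. -/
def relComp (S₁₂ : Submodule ℝ (X₁ × X₂)) (S₂₃ : Submodule ℝ (X₂ × X₃)) :
    Submodule ℝ (X₁ × X₃) where
  carrier := {p | ∃ x₂, (p.1, x₂) ∈ S₁₂ ∧ (x₂, p.2) ∈ S₂₃}
  zero_mem' := ⟨0, by exact S₁₂.zero_mem, by exact S₂₃.zero_mem⟩
  add_mem' := by
    rintro a b ⟨y, hy1, hy2⟩ ⟨z, hz1, hz2⟩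
    exact ⟨y + z, S₁₂.add_mem hy1 hz1, S₂₃.add_mem hy2 hz2⟩
  smul_mem' := by
    rintro c a ⟨y, h1, h2⟩
    exact ⟨c • y, S₁₂.smul_mem c h1, S₂₃.smul_mem c h2⟩

/-- The pairing `{(x, (x₁, x₂)) | (x, x₁) ∈ S₁ ∧ (x, x₂) ∈ S₂}` of two relations. -/
def pairRel (S₁ : Submodule ℝ (X₁ × X₂)) (S₂ : Submodule ℝ (X₁ × X₃)) :
    Submodule ℝ (X₁ × X₂ × X₃) where
  carrier := {p | (p.1, p.2.1) ∈ S₁ ∧ (p.1, p.2.2) ∈ S₂}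
  zero_mem' := ⟨by exact S₁.zero_mem, by exact S₂.zero_mem⟩
  add_mem' := by
    rintro a b ⟨ha1, ha2⟩ ⟨hb1, hb2⟩
    exact ⟨S₁.add_mem ha1 hb1, S₂.add_mem ha2 hb2⟩
  smul_mem' := by
    rintro c a ⟨h1, h2⟩
    exact ⟨S₁.smul_mem c h1, S₂.smul_mem c h2⟩

end relcomp

section contract

variable {W : Type} [AddCommGroup W] [Module ℝ W]
variable {X D Y Xa Da Ya Xg Dg Yg : Type}
  [AddCommGroup X] [Module ℝ X] [AddCommGroup D] [Module ℝ D]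
  [AddCommGroup Y] [Module ℝ Y]
  [AddCommGroup Xa] [Module ℝ Xa] [AddCommGroup Da] [Module ℝ Da]
  [AddCommGroup Ya] [Module ℝ Ya]
  [AddCommGroup Xg] [Module ℝ Xg] [AddCommGroup Dg] [Module ℝ Dg]
  [AddCommGroup Yg] [Module ℝ Yg]

/-- `Sys` implements the contract `(Ass, Gar)` if `E ∘ Sys ≼ Gar` for every
compatible environment `E`, i.e., every environment with `E ≼ Ass`. -/
def Implements (Sys : DVSystem X W D Y)
    (Ass : DVSystem Xa W Da Ya) (Gar : DVSystem Xg W Dg Yg) : Prop :=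
  ∀ (Xe De Ye : Type) [AddCommGroup Xe] [Module ℝ Xe] [FiniteDimensional ℝ Xe]
    [AddCommGroup De] [Module ℝ De] [FiniteDimensional ℝ De]
    [AddCommGroup Ye] [Module ℝ Ye] [FiniteDimensional ℝ Ye]
    (E : DVSystem Xe W De Ye),
    Simulates E Ass → Simulates (comp E Sys) Gar

end contract

section refine

variable {W : Type} [AddCommGroup W] [Module ℝ W]
variable {Xa Da Ya Xg Dg Yg Xa' Da' Ya' Xg' Dg' Yg' : Type}
  [AddCommGroup Xa] [Module ℝ Xa] [AddCommGroup Da] [Module ℝ Da]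
  [AddCommGroup Ya] [Module ℝ Ya]
  [AddCommGroup Xg] [Module ℝ Xg] [AddCommGroup Dg] [Module ℝ Dg]
  [AddCommGroup Yg] [Module ℝ Yg]
  [AddCommGroup Xa'] [Module ℝ Xa'] [AddCommGroup Da'] [Module ℝ Da']
  [AddCommGroup Ya'] [Module ℝ Ya']
  [AddCommGroup Xg'] [Module ℝ Xg'] [AddCommGroup Dg'] [Module ℝ Dg']
  [AddCommGroup Yg'] [Module ℝ Yg']

/-- The contract `(Ass', Gar')` refines the contract `(Ass, Gar)`:
`Ass ≼ Ass'` and `Ass ∘ Gar' ≼ Gar`. -/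
def Refines (Ass' : DVSystem Xa' W Da' Ya') (Gar' : DVSystem Xg' W Dg' Yg')
    (Ass : DVSystem Xa W Da Ya) (Gar : DVSystem Xg W Dg Yg) : Prop :=
  Simulates Ass Ass' ∧ Simulates (comp Ass Gar') Gar

end refine

end DVSystem

open DVSystem

/-!
An environment `E` compatible with `(Ass, Gar)` satisfies `E ≼ Ass ≼ Ass'`, so it is compatible
with `(Ass', Gar')` and `E ∘ Σ ≼ Gar'`. Projecting onto the first factor gives
`E ∘ Σ ≼ E ≼ Ass`. Two simulations of the same system can be run side by side, which yields
`E ∘ Σ ≼ Ass ∘ Gar' ≼ Gar`. The composite's constraint `C₁ x₁ = C₂ x₂` is what makes its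
output `½ (C₁ x₁ + C₂ x₂)` agree with both factors.
-/

namespace DVSystem

variable {W : Type} [AddCommGroup W] [Module ℝ W]

section consistent

variable {X D Y : Type} [AddCommGroup X] [Module ℝ X]
  [AddCommGroup D] [Module ℝ D] [AddCommGroup Y] [Module ℝ Y]

lemma le_V {P : DVSystem X W D Y} {U : Submodule ℝ X} (h : P.Admissible U) : U ≤ P.V :=
  le_sSup h

lemma admissible_V (P : DVSystem X W D Y) : P.Admissible P.V := by
  constructor
  · rw [V, sSup_eq_iSup', Submodule.map_iSup]
    exact iSup_le fun U => U.2.1.trans (sup_le_sup_right (le_iSup (fun U : {U | P.Admissible U} =>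
      (U : Submodule ℝ X)) U) _)
  · exact sSup_le fun U hU => hU.2

lemma H_eq_zero_of_mem_V {P : DVSystem X W D Y} {x : X} (hx : x ∈ P.V) : P.H x = 0 :=
  (admissible_V P).2 hx

lemma exists_A_add_G_mem_V {P : DVSystem X W D Y} {x : X} (hx : x ∈ P.V) :
    ∃ d, P.A x + P.G d ∈ P.V := by
  obtain ⟨y, hy, _, ⟨d, rfl⟩, hyd⟩ :=
    Submodule.mem_sup.mp ((admissible_V P).1 (Submodule.mem_map_of_mem hx))
  exact ⟨-d, by rwa [map_neg, ← hyd, add_neg_cancel_right]⟩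

end consistent

section simulation

variable {X₁ D₁ Y₁ : Type} [AddCommGroup X₁] [Module ℝ X₁]
  [AddCommGroup D₁] [Module ℝ D₁] [AddCommGroup Y₁] [Module ℝ Y₁]
variable {X₂ D₂ Y₂ : Type} [AddCommGroup X₂] [Module ℝ X₂]
  [AddCommGroup D₂] [Module ℝ D₂] [AddCommGroup Y₂] [Module ℝ Y₂]
variable {X₃ D₃ Y₃ : Type} [AddCommGroup X₃] [Module ℝ X₃]
  [AddCommGroup D₃] [Module ℝ D₃] [AddCommGroup Y₃] [Module ℝ Y₃]

/-- The target-side conditions `π₂(S) ⊆ V₂*` and `A₂x₂ + G₂d₂ ∈ V₂*` need not be checked: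
`π₂(S)` is admissible as soon as it lies in `ker H₂`, hence lies in `V₂*`. -/
lemma Simulates.of_step (P₁ : DVSystem X₁ W D₁ Y₁) (P₂ : DVSystem X₂ W D₂ Y₂)
    (S : Submodule ℝ (X₁ × X₂)) (hfst : S.map (LinearMap.fst ℝ X₁ X₂) = P₁.V)
    (hstep : ∀ x₁ x₂, (x₁, x₂) ∈ S → ∀ d₁, P₁.A x₁ + P₁.G d₁ ∈ P₁.V →
      ∃ d₂, (P₁.A x₁ + P₁.G d₁, P₂.A x₂ + P₂.G d₂) ∈ S)
    (hker : S.map (LinearMap.snd ℝ X₁ X₂) ≤ LinearMap.ker P₂.H)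
    (hC : ∀ x₁ x₂, (x₁, x₂) ∈ S → P₁.C x₁ = P₂.C x₂) :
    P₁.Simulates P₂ := by
  have hsnd : S.map (LinearMap.snd ℝ X₁ X₂) ≤ P₂.V := by
    refine le_V ⟨?_, hker⟩
    rintro _ ⟨_, ⟨⟨x₁, x₂⟩, hx, rfl⟩, rfl⟩
    obtain ⟨d₁, hd₁⟩ := exists_A_add_G_mem_V (hfst ▸ Submodule.mem_map_of_mem hx)
    obtain ⟨d₂, hd₂⟩ := hstep x₁ x₂ hx d₁ hd₁
    exact Submodule.mem_sup.mpr ⟨_, Submodule.mem_map_of_mem hd₂, -P₂.G d₂,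
      neg_mem (LinearMap.mem_range_self _ d₂), add_neg_cancel_right _ _⟩
  refine ⟨S, ⟨hfst.le, hsnd, fun x₁ x₂ hx => ⟨fun d₁ hd₁ => ?_, hC x₁ x₂ hx⟩⟩, hfst⟩
  obtain ⟨d₂, hd₂⟩ := hstep x₁ x₂ hx d₁ hd₁
  exact ⟨d₂, hsnd (Submodule.mem_map_of_mem hd₂), hd₂⟩

lemma Simulates.trans {P₁ : DVSystem X₁ W D₁ Y₁} {P₂ : DVSystem X₂ W D₂ Y₂}
    {P₃ : DVSystem X₃ W D₃ Y₃} (h₁₂ : P₁.Simulates P₂) (h₂₃ : P₂.Simulates P₃) :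
    P₁.Simulates P₃ := by
  obtain ⟨S, ⟨_, hS₂, hS⟩, hS₁⟩ := h₁₂
  obtain ⟨T, ⟨_, hT₃, hT⟩, hT₂⟩ := h₂₃
  refine Simulates.of_step P₁ P₃ (relComp S T) (le_antisymm ?_ ?_) ?_ ?_ ?_
  · rintro _ ⟨⟨x₁, x₃⟩, ⟨x₂, hx₁₂, -⟩, rfl⟩
    exact hS₁ ▸ ⟨_, hx₁₂, rfl⟩
  · intro x₁ hx₁
    obtain ⟨⟨_, x₂⟩, hx₁₂, rfl⟩ := hS₁ ▸ hx₁
    obtain ⟨⟨_, x₃⟩, hx₂₃, rfl⟩ := hT₂ ▸ hS₂ (Submodule.mem_map_of_mem hx₁₂)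
    exact ⟨(_, x₃), ⟨_, hx₁₂, hx₂₃⟩, rfl⟩
  · rintro x₁ x₃ ⟨x₂, hx₁₂, hx₂₃⟩ d₁ hd₁
    obtain ⟨d₂, hd₂, hx₁₂'⟩ := (hS x₁ x₂ hx₁₂).1 d₁ hd₁
    obtain ⟨d₃, -, hx₂₃'⟩ := (hT x₂ x₃ hx₂₃).1 d₂ hd₂
    exact ⟨d₃, _, hx₁₂', hx₂₃'⟩
  · rintro _ ⟨⟨x₁, x₃⟩, ⟨x₂, -, hx₂₃⟩, rfl⟩
    exact H_eq_zero_of_mem_V (hT₃ ⟨_, hx₂₃, rfl⟩)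
  · rintro x₁ x₃ ⟨x₂, hx₁₂, hx₂₃⟩
    exact (hS x₁ x₂ hx₁₂).2.trans (hT x₂ x₃ hx₂₃).2

end simulation

section composition

variable {X₁ D₁ Y₁ : Type} [AddCommGroup X₁] [Module ℝ X₁]
  [AddCommGroup D₁] [Module ℝ D₁] [AddCommGroup Y₁] [Module ℝ Y₁]
variable {X₂ D₂ Y₂ : Type} [AddCommGroup X₂] [Module ℝ X₂]
  [AddCommGroup D₂] [Module ℝ D₂] [AddCommGroup Y₂] [Module ℝ Y₂]
variable {X D Y : Type} [AddCommGroup X] [Module ℝ X]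
  [AddCommGroup D] [Module ℝ D] [AddCommGroup Y] [Module ℝ Y]

lemma comp_C_eq_of_C_eq {P₁ : DVSystem X₁ W D₁ Y₁} {P₂ : DVSystem X₂ W D₂ Y₂}
    {p : X₁ × X₂} (h : P₁.C p.1 = P₂.C p.2) : (P₁.comp P₂).C p = P₁.C p.1 := by
  change (1 / 2 : ℝ) • (P₁.C p.1 + P₂.C p.2) = P₁.C p.1
  rw [← h, ← two_smul ℝ, smul_smul]
  norm_num

lemma C_fst_eq_C_snd_of_mem_V_comp {P₁ : DVSystem X₁ W D₁ Y₁} {P₂ : DVSystem X₂ W D₂ Y₂}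
    {p : X₁ × X₂} (hp : p ∈ (P₁.comp P₂).V) : P₁.C p.1 = P₂.C p.2 :=
  sub_eq_zero.mp (congrArg (fun y => y.2.2) (H_eq_zero_of_mem_V hp))

/-- The graph of the projection `V* → X₁`. -/
lemma comp_simulates_left (P₁ : DVSystem X₁ W D₁ Y₁) (P₂ : DVSystem X₂ W D₂ Y₂) :
    (P₁.comp P₂).Simulates P₁ := by
  refine Simulates.of_step _ P₁ ((P₁.comp P₂).V.map (LinearMap.id.prod (LinearMap.fst ℝ X₁ X₂)))
    ?_ ?_ ?_ ?_
  · rw [← Submodule.map_comp, LinearMap.fst_prod, Submodule.map_id]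
  · rintro p _ ⟨q, -, hq⟩ d hd
    obtain ⟨rfl, rfl⟩ := Prod.mk.inj hq
    exact ⟨d.1, _, hd, rfl⟩
  · rintro _ ⟨_, ⟨p, hp, rfl⟩, rfl⟩
    exact congrArg Prod.fst (H_eq_zero_of_mem_V hp)
  · rintro _ _ ⟨p, hp, hpq⟩
    obtain ⟨rfl, rfl⟩ := Prod.mk.inj hpq
    exact comp_C_eq_of_C_eq (C_fst_eq_C_snd_of_mem_V_comp hp)

lemma Simulates.comp {P : DVSystem X W D Y} {P₁ : DVSystem X₁ W D₁ Y₁}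
    {P₂ : DVSystem X₂ W D₂ Y₂} (h₁ : P.Simulates P₁) (h₂ : P.Simulates P₂) :
    P.Simulates (P₁.comp P₂) := by
  obtain ⟨S, ⟨_, hS₁, hS⟩, hSP⟩ := h₁
  obtain ⟨T, ⟨_, hT₂, hT⟩, hTP⟩ := h₂
  have hC : ∀ x x₁ x₂, (x, x₁) ∈ S → (x, x₂) ∈ T → P₁.C x₁ = P₂.C x₂ := fun x x₁ x₂ hx₁ hx₂ =>
    (hS x x₁ hx₁).2.symm.trans (hT x x₂ hx₂).2
  refine Simulates.of_step P _ (pairRel S T) (le_antisymm ?_ ?_) ?_ ?_ ?_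
  · rintro _ ⟨⟨x, _⟩, ⟨hx₁, -⟩, rfl⟩
    exact hSP ▸ ⟨_, hx₁, rfl⟩
  · intro x hx
    obtain ⟨⟨_, x₁⟩, hx₁, rfl⟩ := hSP ▸ hx
    obtain ⟨⟨_, x₂⟩, hx₂, rfl⟩ := hTP ▸ hx
    exact ⟨(_, x₁, x₂), ⟨hx₁, hx₂⟩, rfl⟩
  · rintro x ⟨x₁, x₂⟩ ⟨hx₁, hx₂⟩ d hd
    obtain ⟨d₁, -, hx₁'⟩ := (hS x x₁ hx₁).1 d hd
    obtain ⟨d₂, -, hx₂'⟩ := (hT x x₂ hx₂).1 d hd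
    exact ⟨(d₁, d₂), hx₁', hx₂'⟩
  · rintro _ ⟨⟨x, x₁, x₂⟩, ⟨hx₁, hx₂⟩, rfl⟩
    change (P₁.H x₁, P₂.H x₂, P₁.C x₁ - P₂.C x₂) = 0
    rw [sub_eq_zero.mpr (hC x x₁ x₂ hx₁ hx₂),
      H_eq_zero_of_mem_V (x := x₁) (hS₁ ⟨_, hx₁, rfl⟩),
      H_eq_zero_of_mem_V (x := x₂) (hT₂ ⟨_, hx₂, rfl⟩)]
    rfl
  · rintro x ⟨x₁, x₂⟩ ⟨hx₁, hx₂⟩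
    rw [comp_C_eq_of_C_eq (hC x x₁ x₂ hx₁ hx₂)]
    exact (hS x x₁ hx₁).2

end composition

end DVSystem

theorem refines_implements_general {W : Type} [AddCommGroup W] [Module ℝ W]
    {X D Y : Type} [AddCommGroup X] [Module ℝ X]
    [AddCommGroup D] [Module ℝ D]
    [AddCommGroup Y] [Module ℝ Y]
    {Xa Da Ya : Type} [AddCommGroup Xa] [Module ℝ Xa]
    [AddCommGroup Da] [Module ℝ Da]
    [AddCommGroup Ya] [Module ℝ Ya]
    {Xg Dg Yg : Type} [AddCommGroup Xg] [Module ℝ Xg]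
    [AddCommGroup Dg] [Module ℝ Dg]
    [AddCommGroup Yg] [Module ℝ Yg]
    {Xa2 Da2 Ya2 : Type} [AddCommGroup Xa2] [Module ℝ Xa2]
    [AddCommGroup Da2] [Module ℝ Da2]
    [AddCommGroup Ya2] [Module ℝ Ya2]
    {Xg2 Dg2 Yg2 : Type} [AddCommGroup Xg2] [Module ℝ Xg2]
    [AddCommGroup Dg2] [Module ℝ Dg2]
    [AddCommGroup Yg2] [Module ℝ Yg2]
    (Sys : DVSystem X W D Y)
    (Ass' : DVSystem Xa2 W Da2 Ya2) (Gar' : DVSystem Xg2 W Dg2 Yg2)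
    (Ass : DVSystem Xa W Da Ya) (Gar : DVSystem Xg W Dg Yg)
    (href : Refines Ass' Gar' Ass Gar)
    (himp : Implements Sys Ass' Gar') :
    Implements Sys Ass Gar := by
  intro Xe De Ye _ _ _ _ _ _ _ _ _ E hEAss
  have hEAss' : E.Simulates Ass' := hEAss.trans href.1
  have hGar' : (E.comp Sys).Simulates Gar' := himp Xe De Ye E hEAss'
  have hAss : (E.comp Sys).Simulates Ass := (comp_simulates_left E Sys).trans hEAss
  exact (hAss.comp hGar').trans href.2

/-- Refinement preserves implementations: if `(Ass', Gar')` refines `(Ass, Gar)` and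
`Σ` implements `(Ass', Gar')`, then `Σ` implements `(Ass, Gar)`. -/
theorem refines_implements {W : Type} [AddCommGroup W] [Module ℝ W] [FiniteDimensional ℝ W]
    {X D Y : Type} [AddCommGroup X] [Module ℝ X] [FiniteDimensional ℝ X]
    [AddCommGroup D] [Module ℝ D] [FiniteDimensional ℝ D]
    [AddCommGroup Y] [Module ℝ Y] [FiniteDimensional ℝ Y]
    {Xa Da Ya : Type} [AddCommGroup Xa] [Module ℝ Xa] [FiniteDimensional ℝ Xa]
    [AddCommGroup Da] [Module ℝ Da] [FiniteDimensional ℝ Da]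
    [AddCommGroup Ya] [Module ℝ Ya] [FiniteDimensional ℝ Ya]
    {Xg Dg Yg : Type} [AddCommGroup Xg] [Module ℝ Xg] [FiniteDimensional ℝ Xg]
    [AddCommGroup Dg] [Module ℝ Dg] [FiniteDimensional ℝ Dg]
    [AddCommGroup Yg] [Module ℝ Yg] [FiniteDimensional ℝ Yg]
    {Xa2 Da2 Ya2 : Type} [AddCommGroup Xa2] [Module ℝ Xa2] [FiniteDimensional ℝ Xa2]
    [AddCommGroup Da2] [Module ℝ Da2] [FiniteDimensional ℝ Da2]
    [AddCommGroup Ya2] [Module ℝ Ya2] [FiniteDimensional ℝ Ya2]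
    {Xg2 Dg2 Yg2 : Type} [AddCommGroup Xg2] [Module ℝ Xg2] [FiniteDimensional ℝ Xg2]
    [AddCommGroup Dg2] [Module ℝ Dg2] [FiniteDimensional ℝ Dg2]
    [AddCommGroup Yg2] [Module ℝ Yg2] [FiniteDimensional ℝ Yg2]
    (Sys : DVSystem X W D Y)
    (Ass' : DVSystem Xa2 W Da2 Ya2) (Gar' : DVSystem Xg2 W Dg2 Yg2)
    (Ass : DVSystem Xa W Da Ya) (Gar : DVSystem Xg W Dg Yg)
    (href : Refines Ass' Gar' Ass Gar)
    (himp : Implements Sys Ass' Gar') :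
    Implements Sys Ass Gar :=
  refines_implements_general Sys Ass' Gar' Ass Gar href himp
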